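/- Let λ > 0, let (T_i)_{i≥1} be i.i.d. exponential random variables with rate λ, let S_k = T_1 + ... + T_k, and let X be an exponential random variable with rate λ independent of the sequence (T_i). Then for every k ≥ 1, the conditional probability P(S_k < X < S_{k+1} | S_1 < X) = 2^{-k}; that is, conditioned on at least one reception, the number of receptions of the same packet is geometrically distributed with parameter 1/2. -/

import Mathlib

open MeasureTheory ProbabilityTheory Real Filter Topology
open scoped ENNReal

/-!
If `S ≥ 0` is independent of `X ∼ Exp(λ)`, conditioning on `S` gives
`P(S < X) = E[exp(-λ S)]`, and for `S_n = T_0 + ⋯ + T_{n-1}` this Laplace transform factorises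
into `(λ / (λ + λ))^n = 2^{-n}`. As `X` has no atoms, `P(S_n ≤ X) = 2^{-n}` as well, and since the
`T_i` are a.s. positive, `P(S_k < X < S_{k+1}) = 2^{-k} - 2^{-(k+1)}`. The event `S_1 < X` contains
it up to a null set and has probability `1/2`.
-/

namespace ProbabilityTheory

open Set

instance nullSingletonClass_expMeasure (r : ℝ) : NullSingletonClass (expMeasure r) := by
  unfold expMeasure gammaMeasure; infer_instance

lemma expMeasure_Iic_zero (r : ℝ) : expMeasure r (Iic 0) = 0 := by
  rw [← measure_congr Iio_ae_eq_Iic, expMeasure, gammaMeasure,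
    withDensity_apply _ measurableSet_Iio]
  exact lintegral_exponentialPDF_of_nonpos le_rfl

lemma ae_pos_expMeasure (r : ℝ) : ∀ᵐ x ∂expMeasure r, 0 < x := by
  rw [ae_iff]
  simp only [not_lt]
  exact expMeasure_Iic_zero r

lemma expMeasure_Ioi {r : ℝ} (hr : 0 < r) {x : ℝ} (hx : 0 ≤ x) :
    expMeasure r (Ioi x) = ENNReal.ofReal (exp (-(r * x))) := by
  have := isProbabilityMeasure_expMeasure hr
  have hle : exp (-(r * x)) ≤ 1 := exp_le_one_iff.2 (by nlinarith)
  rw [← compl_Iic, prob_compl_eq_one_sub measurableSet_Iic, ← ofReal_cdf, cdf_expMeasure_eq hr,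
    if_pos hx, ← ENNReal.ofReal_one, ← ENNReal.ofReal_sub _ (sub_nonneg.2 hle), sub_sub_cancel]

lemma mgf_id_expMeasure {r t : ℝ} (hr : 0 < r) (ht : t < r) :
    mgf id (expMeasure r) t = r / (r - t) := by
  have hpdf (x : ℝ) : (exponentialPDF r x).toReal = if 0 ≤ x then r * exp (-(r * x)) else 0 := by
    rw [exponentialPDF_eq, ENNReal.toReal_ofReal]
    split_ifs <;> positivity
  calc mgf id (expMeasure r) t
      = ∫ x, (exponentialPDF r x).toReal • exp (t * x) := by
        rw [mgf, expMeasure, gammaMeasure, integral_withDensity_eq_integral_toReal_smul]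
        · rfl
        · exact (measurable_exponentialPDFReal r).ennreal_ofReal
        · exact ae_of_all _ fun _ => ENNReal.ofReal_lt_top
    _ = ∫ x in Ioi 0, r * exp ((t - r) * x) := by
        rw [← setIntegral_eq_integral_of_forall_compl_eq_zero (s := Ici 0)
          (fun x hx => by rw [hpdf, if_neg (show ¬0 ≤ x from hx), zero_smul]),
          integral_Ici_eq_integral_Ioi]
        refine setIntegral_congr_fun measurableSet_Ioi fun x (hx : 0 < x) => ?_
        rw [smul_eq_mul, hpdf, if_pos hx.le, mul_assoc, ← exp_add]
        ring_nf
    _ = r / (r - t) := by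
        rw [integral_const_mul, integral_exp_mul_Ioi (by linarith), mul_zero, exp_zero,
          ← neg_sub, div_neg, neg_div, neg_neg, mul_one_div]

section Independence

variable {Ω : Type*} [MeasurableSpace Ω] {μ : Measure Ω} [IsFiniteMeasure μ]

lemma IndepFun.measure_preimage_prodMk_eq_lintegral {β γ : Type*} [MeasurableSpace β]
    [MeasurableSpace γ] {Y : Ω → β} {X : Ω → γ} (hY : AEMeasurable Y μ)
    (hX : AEMeasurable X μ) (hind : IndepFun Y X μ) {s : Set (β × γ)} (hs : MeasurableSet s) :
    μ ((fun ω => (Y ω, X ω)) ⁻¹' s) = ∫⁻ ω, μ.map X (Prod.mk (Y ω) ⁻¹' s) ∂μ := by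
  rw [← Measure.map_apply_of_aemeasurable (hY.prodMk hX) hs,
    (indepFun_iff_map_prod_eq_prod_map_map hY hX).1 hind, Measure.prod_apply hs,
    lintegral_map' (measurable_measure_prodMk_left hs).aemeasurable hY]

variable {Y X : Ω → ℝ}

lemma IndepFun.measure_le_eq_measure_lt [NullSingletonClass (μ.map X)] (hY : AEMeasurable Y μ)
    (hX : AEMeasurable X μ) (hind : IndepFun Y X μ) :
    μ {ω | Y ω ≤ X ω} = μ {ω | Y ω < X ω} := by
  rw [show {ω | Y ω ≤ X ω} = (fun ω => (Y ω, X ω)) ⁻¹' {p | p.1 ≤ p.2} from rfl,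
    show {ω | Y ω < X ω} = (fun ω => (Y ω, X ω)) ⁻¹' {p | p.1 < p.2} from rfl,
    hind.measure_preimage_prodMk_eq_lintegral hY hX measurableSet_le',
    hind.measure_preimage_prodMk_eq_lintegral hY hX measurableSet_lt']
  exact lintegral_congr fun ω => measure_congr Ioi_ae_eq_Ici.symm

lemma IndepFun.measure_lt_eq_ofReal_mgf {r : ℝ} (hr : 0 < r) (hY : AEMeasurable Y μ)
    (hX : AEMeasurable X μ) (hind : IndepFun Y X μ) (hXr : μ.map X = expMeasure r)
    (hY₀ : 0 ≤ᵐ[μ] Y) :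
    μ {ω | Y ω < X ω} = ENNReal.ofReal (mgf Y μ (-r)) := by
  have hexp_le : ∀ᵐ ω ∂μ, exp (-r * Y ω) ≤ 1 := by
    filter_upwards [hY₀] with ω hω
    exact exp_le_one_iff.2 (mul_nonpos_of_nonpos_of_nonneg (neg_nonpos.2 hr.le) hω)
  rw [show {ω | Y ω < X ω} = (fun ω => (Y ω, X ω)) ⁻¹' {p | p.1 < p.2} from rfl,
    hind.measure_preimage_prodMk_eq_lintegral hY hX measurableSet_lt',
    mgf, ofReal_integral_eq_lintegral_ofReal]
  · refine lintegral_congr_ae ?_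
    filter_upwards [hY₀] with ω hω
    rw [hXr, neg_mul]
    exact expMeasure_Ioi hr hω
  · refine .of_bound ((hY.const_mul _).exp.aestronglyMeasurable) 1 ?_
    filter_upwards [hexp_le] with ω hω
    rwa [Real.norm_of_nonneg (exp_pos _).le]
  · exact ae_of_all _ fun ω => (exp_pos _).le

end Independence

section ExponentialSums

variable {Ω : Type*} [MeasurableSpace Ω] {μ : Measure Ω} {r : ℝ}

lemma aemeasurable_of_map_eq_expMeasure (hr : 0 < r) {Y : Ω → ℝ} (hY : μ.map Y = expMeasure r) :
    AEMeasurable Y μ := by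
  have := isProbabilityMeasure_expMeasure hr
  exact .of_map_ne_zero (hY ▸ IsProbabilityMeasure.ne_zero _)

lemma ae_pos_of_map_eq_expMeasure (hr : 0 < r) {Y : Ω → ℝ} (hY : μ.map Y = expMeasure r) :
    ∀ᵐ ω ∂μ, 0 < Y ω :=
  ae_of_ae_map (aemeasurable_of_map_eq_expMeasure hr hY) (hY ▸ ae_pos_expMeasure r)

lemma iIndepFun.mgf_sum_of_map_eq_expMeasure {ι : Type*} {T : ι → Ω → ℝ} (hr : 0 < r)
    (hind : iIndepFun T μ) (hT : ∀ i, μ.map (T i) = expMeasure r) {t : ℝ} (ht : t < r)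
    (s : Finset ι) :
    mgf (∑ i ∈ s, T i) μ t = (r / (r - t)) ^ s.card := by
  have hTm i := aemeasurable_of_map_eq_expMeasure hr (hT i)
  rw [hind.mgf_sum₀ hTm]
  exact Finset.prod_eq_pow_card fun i _ => by
    rw [← mgf_id_map (hTm i), hT i, mgf_id_expMeasure hr ht]

lemma iIndepFun.indepFun_finsetSum_elim {ι : Type*} {T : ι → Ω → ℝ} {X : Ω → ℝ}
    (hind : iIndepFun (fun o : Option ι => o.elim X T) μ) (hX : AEMeasurable X μ)
    (hT : ∀ i, AEMeasurable (T i) μ) (s : Finset ι) :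
    IndepFun (∑ i ∈ s, T i) X μ := by
  have hm : ∀ o : Option ι, AEMeasurable (o.elim X T) μ := by
    rintro (_ | i)
    exacts [hX, hT i]
  simpa using hind.indepFun_finsetSum_of_notMem₀ hm (s := s.map .some) (i := none) (by simp)

variable [IsProbabilityMeasure μ] {T : ℕ → Ω → ℝ} {X : Ω → ℝ}

lemma measure_sum_range_lt_eq_inv_two_pow (hr : 0 < r) (hT : ∀ i, μ.map (T i) = expMeasure r)
    (hX : μ.map X = expMeasure r) (hind : iIndepFun (fun o : Option ℕ => o.elim X T) μ)
    (n : ℕ) :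
    μ {ω | ∑ i ∈ Finset.range n, T i ω < X ω} = 2⁻¹ ^ n := by
  have hTm i := aemeasurable_of_map_eq_expMeasure hr (hT i)
  have hXm := aemeasurable_of_map_eq_expMeasure hr hX
  have hS₀ : 0 ≤ᵐ[μ] ∑ i ∈ Finset.range n, T i := by
    filter_upwards [ae_all_iff.2 fun i => ae_pos_of_map_eq_expMeasure hr (hT i)] with ω hω
    simpa only [Pi.zero_apply, Finset.sum_apply] using Finset.sum_nonneg fun i _ => (hω i).le
  have hTind : iIndepFun T μ := hind.precomp (g := some) (Option.some_injective ℕ)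
  have hlt_mgf := (hind.indepFun_finsetSum_elim hXm hTm (Finset.range n)).measure_lt_eq_ofReal_mgf
    hr (Finset.aemeasurable_sum _ fun i _ => hTm i) hXm hX hS₀
  simp only [Finset.sum_apply] at hlt_mgf
  rw [hlt_mgf, hTind.mgf_sum_of_map_eq_expMeasure hr hT (by linarith), Finset.card_range,
    sub_neg_eq_add, ← two_mul, div_mul_cancel_right₀ hr.ne', ENNReal.ofReal_pow (by norm_num),
    ENNReal.ofReal_inv_of_pos two_pos, ENNReal.ofReal_ofNat]

lemma measure_sum_range_le_eq_inv_two_pow (hr : 0 < r) (hT : ∀ i, μ.map (T i) = expMeasure r)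
    (hX : μ.map X = expMeasure r) (hind : iIndepFun (fun o : Option ℕ => o.elim X T) μ)
    (n : ℕ) :
    μ {ω | ∑ i ∈ Finset.range n, T i ω ≤ X ω} = 2⁻¹ ^ n := by
  have hTm i := aemeasurable_of_map_eq_expMeasure hr (hT i)
  have hXm := aemeasurable_of_map_eq_expMeasure hr hX
  have : NullSingletonClass (μ.map X) := hX ▸ nullSingletonClass_expMeasure r
  have hle_lt := (hind.indepFun_finsetSum_elim hXm hTm (Finset.range n)).measure_le_eq_measure_lt
    (Finset.aemeasurable_sum _ fun i _ => hTm i) hXm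
  simp only [Finset.sum_apply] at hle_lt
  rw [hle_lt, measure_sum_range_lt_eq_inv_two_pow hr hT hX hind]

lemma measure_sum_range_lt_and_lt_sum_range_succ (hr : 0 < r)
    (hT : ∀ i, μ.map (T i) = expMeasure r) (hX : μ.map X = expMeasure r)
    (hind : iIndepFun (fun o : Option ℕ => o.elim X T) μ) (n : ℕ) :
    μ {ω | ∑ i ∈ Finset.range n, T i ω < X ω ∧ X ω < ∑ i ∈ Finset.range (n + 1), T i ω}
      = 2⁻¹ ^ (n + 1) := by
  have hTm i := aemeasurable_of_map_eq_expMeasure hr (hT i)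
  have hXm := aemeasurable_of_map_eq_expMeasure hr hX
  have hsub : {ω | ∑ i ∈ Finset.range (n + 1), T i ω ≤ X ω}
      ≤ᵐ[μ] {ω | ∑ i ∈ Finset.range n, T i ω < X ω} := by
    filter_upwards [ae_pos_of_map_eq_expMeasure hr (hT n)] with ω hω (h : _ ≤ _)
    rw [Finset.sum_range_succ] at h
    exact (lt_add_of_pos_right _ hω).trans_le h
  have hhalf : (2⁻¹ : ℝ≥0∞) ^ n = 2⁻¹ ^ (n + 1) + 2⁻¹ ^ (n + 1) := by
    rw [pow_succ, ← mul_add, ENNReal.inv_two_add_inv_two, mul_one]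
  rw [show {ω | ∑ i ∈ Finset.range n, T i ω < X ω ∧ X ω < ∑ i ∈ Finset.range (n + 1), T i ω}
      = {ω | ∑ i ∈ Finset.range n, T i ω < X ω} \ {ω | ∑ i ∈ Finset.range (n + 1), T i ω ≤ X ω}
      by ext; simp only [mem_ofPred_eq, Set.mem_sdiff, not_le],
    measure_sdiff' _ (nullMeasurableSet_le (Finset.aemeasurable_fun_sum _ fun i _ => hTm i) hXm)
      (measure_ne_top _ _), measure_congr (union_ae_eq_left_iff_ae_subset.2 hsub),
    measure_sum_range_lt_eq_inv_two_pow hr hT hX hind,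
    measure_sum_range_le_eq_inv_two_pow hr hT hX hind]
  exact ENNReal.sub_eq_of_eq_add (by simp) hhalf

end ExponentialSums

end ProbabilityTheory

/-- Let `λ > 0`, let `(T_i)` be i.i.d. exponential random variables with rate `λ`,
let `S_k = T_1 + ... + T_k` (here `S k = ∑ i ∈ Finset.range k, T i`), and let `X` be an
exponential random variable with rate `λ`, independent of the sequence `(T_i)`.
Then for every `k ≥ 1`, the conditional probability
`P(S_k < X < S_{k+1} | S_1 < X) = 2^{-k}`: conditioned on at least one reception, the number
of receptions of the same packet is geometrically distributed with parameter `1/2`. -/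
theorem cond_prob_erlang_lt_exponential_lt_erlang_succ
    {Ω : Type*} [MeasureSpace Ω] [IsProbabilityMeasure (ℙ : Measure Ω)]
    (lam : ℝ) (hlam : 0 < lam) (T : ℕ → Ω → ℝ) (X : Ω → ℝ)
    (hT : ∀ i, Measure.map (T i) ℙ = ProbabilityTheory.expMeasure lam)
    (hX : Measure.map X ℙ = ProbabilityTheory.expMeasure lam)
    (hindep : iIndepFun (m := fun _ : Option ℕ => Real.measurableSpace)
      (fun o : Option ℕ => o.elim X T) ℙ)
    (k : ℕ) (hk : 1 ≤ k) :
    ProbabilityTheory.cond ℙ {ω | ∑ i ∈ Finset.range 1, T i ω < X ω}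
        {ω | ∑ i ∈ Finset.range k, T i ω < X ω ∧ X ω < ∑ i ∈ Finset.range (k + 1), T i ω}
      = (1 / 2 : ℝ≥0∞) ^ k := by
  have hTm i := aemeasurable_of_map_eq_expMeasure hlam (hT i)
  have hXm := aemeasurable_of_map_eq_expMeasure hlam hX
  set A := {ω | ∑ i ∈ Finset.range 1, T i ω < X ω}
  set B := {ω | ∑ i ∈ Finset.range k, T i ω < X ω ∧ X ω < ∑ i ∈ Finset.range (k + 1), T i ω}
  have hBA : (B ∩ A : Set Ω) =ᵐ[ℙ] B := by
    filter_upwards [ae_all_iff.2 fun i => ae_pos_of_map_eq_expMeasure hlam (hT i)] with ω hω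
    refine propext ⟨And.left, fun h => ⟨h, lt_of_le_of_lt ?_ h.1⟩⟩
    exact Finset.sum_le_sum_of_subset_of_nonneg (Finset.range_subset_range.2 hk)
      fun i _ _ => (hω i).le
  rw [ProbabilityTheory.cond, Measure.smul_apply, Measure.restrict_apply₀' (nullMeasurableSet_lt
      (Finset.aemeasurable_fun_sum _ fun i _ => hTm i) hXm), measure_congr hBA,
    measure_sum_range_lt_and_lt_sum_range_succ hlam hT hX hindep,
    measure_sum_range_lt_eq_inv_two_pow hlam hT hX hindep, pow_one, smul_eq_mul, inv_inv,
    pow_succ, mul_comm, mul_assoc, ENNReal.inv_mul_cancel two_ne_zero ENNReal.ofNat_ne_top,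
    mul_one, one_div]
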